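/- arXiv:2008.12358 — 2 statements merged into one kernel-verified Lean document; each statement's English description precedes it below -/
import Mathlib

section
/- Let (X,d) be a complete metric space and m a nonnegative Borel measure on X, finite on bounded sets. Let f ∈ Lip_bs(X) with f ≥ 0 and set M := sup_X f. Then for Lebesgue-a.e. t > 0 the superlevel set {f > t} has finite perimeter, and the coarea inequality ∫_0^M Per({f > t}) dt ≤ ∫_X lip(f) dm holds. -/
/-
For `t > 0` the ramps `min 1 (max 0 ((n + 1) * (f - t)))` are Lipschitz, converge in `L¹` to the
indicator of `{f > t}` (dominated by it, and `m {f > t} < ∞` because `{f > t} ⊆ supp f`), and their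
slope vanishes off the band `{t ≤ f ≤ t + 1/(n+1)}` and is at most `(n + 1) lip f` on it. Hence
`Per {f > t} ≤ G t := liminf_n (n + 1) ∫_{band} lip f dm`. By Fatou and Tonelli,
`∫ G dt ≤ liminf_n ∫ lip f(x) (n + 1) |{t : t ≤ f x ≤ t + 1/(n+1)}| dm(x) = ∫ lip f dm`. This is
finite, as `lip f ≤ Lip f` and `lip f` vanishes off the bounded closed support of `f`, so `G t < ∞`
for a.e. `t`.
-/

open MeasureTheory Filter Topology ENNReal

/-- The slope (pointwise Lipschitz constant) of `f` at `x`, with the convention that it is `0`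
at isolated points. -/
noncomputable def lipSlope {X : Type*} [MetricSpace X] (f : X → ℝ) (x : X) : ℝ :=
  Filter.limsup (fun y => |f y - f x| / dist y x) (𝓝[≠] x)

/-- Lipschitz functions with bounded support. -/
def LipBS {X : Type*} [MetricSpace X] (f : X → ℝ) : Prop :=
  (∃ K : NNReal, LipschitzWith K f) ∧ Bornology.IsBounded (Function.support f)

/-- Functions which are Lipschitz on bounded sets. -/
def LipLoc {X : Type*} [MetricSpace X] (f : X → ℝ) : Prop :=
  ∀ s : Set X, Bornology.IsBounded s → ∃ K : NNReal, LipschitzOnWith K f s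

/-- The perimeter of a Borel set `A`. -/
noncomputable def perimeter {X : Type*} [MetricSpace X] [MeasurableSpace X]
    (m : Measure X) (A : Set X) : ℝ≥0∞ :=
  sInf { p : ℝ≥0∞ | ∃ f : ℕ → X → ℝ, (∀ n, LipLoc (f n)) ∧
    Tendsto (fun n => ∫⁻ x, ENNReal.ofReal |f n x - A.indicator (fun _ => (1:ℝ)) x| ∂m)
      atTop (𝓝 0) ∧
    p = Filter.liminf (fun n => ∫⁻ x, ENNReal.ofReal (lipSlope (f n) x) ∂m) atTop }

section eLipSlope

variable {X : Type*} [MetricSpace X] {f : X → ℝ} {x : X} {K : NNReal}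

-- Unlike `lipSlope`, this has no junk value where the difference quotients are unbounded.
noncomputable def eLipSlope (f : X → ℝ) (x : X) : ℝ≥0∞ :=
  limsup (fun y => ENNReal.ofReal (|f y - f x| / dist y x)) (𝓝[≠] x)

theorem LipschitzWith.abs_sub_div_dist_le (hf : LipschitzWith K f) (x y : X) :
    |f y - f x| / dist y x ≤ K := by
  rw [← Real.dist_eq]
  exact div_le_of_le_mul₀ dist_nonneg K.coe_nonneg (hf.dist_le_mul y x)

theorem ofReal_lipSlope (hf : LipschitzWith K f) (x : X) :
    ENNReal.ofReal (lipSlope f x) = eLipSlope f x := by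
  rcases eq_or_neBot (𝓝[≠] x) with h | h
  · simp [lipSlope, eLipSlope, h, Filter.limsup, Filter.limsSup]
  · exact ENNReal.ofReal_mono.map_limsup_of_continuousAt _ ENNReal.continuous_ofReal.continuousAt
      (isBoundedUnder_of ⟨K, hf.abs_sub_div_dist_le x⟩)
      (isCoboundedUnder_le_of_le _ fun y => div_nonneg (abs_nonneg _) dist_nonneg)

theorem eLipSlope_le (hf : LipschitzWith K f) (x : X) : eLipSlope f x ≤ K :=
  limsup_le_of_le (by isBoundedDefault) <| Eventually.of_forall fun y =>
    (ENNReal.ofReal_le_ofReal (hf.abs_sub_div_dist_le x y)).trans_eq ENNReal.ofReal_coe_nnreal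

theorem eLipSlope_eq_zero_of_eventually_eq (h : ∀ᶠ y in 𝓝 x, f y = f x) :
    eLipSlope f x = 0 := by
  refine nonpos_iff_eq_zero.1 (limsup_le_of_le (by isBoundedDefault) ?_)
  filter_upwards [nhdsWithin_le_nhds h] with y hy
  simp [hy]

theorem eLipSlope_comp_le {φ : ℝ → ℝ} {L : NNReal} (hφ : LipschitzWith L φ) (f : X → ℝ) (x : X) :
    eLipSlope (φ ∘ f) x ≤ L * eLipSlope f x := by
  rw [eLipSlope, eLipSlope, ← ENNReal.limsup_const_mul_of_ne_top ENNReal.coe_ne_top]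
  refine limsup_le_limsup (Eventually.of_forall fun y => ?_)
  dsimp only [Function.comp]
  rw [← ENNReal.ofReal_coe_nnreal, ← ENNReal.ofReal_mul L.coe_nonneg, ← mul_div_assoc]
  gcongr
  simpa [Real.dist_eq] using hφ.dist_le_mul (f y) (f x)

theorem eLipSlope_eq_iInf_iSup (f : X → ℝ) (x : X) :
    eLipSlope f x = ⨅ n : ℕ, ⨆ y ∈ Metric.ball x (1 / (n + 1)) ∩ {x}ᶜ,
      ENNReal.ofReal (|f y - f x| / dist y x) := by
  rw [eLipSlope, nhdsWithin,
    (Metric.nhds_basis_ball_inv_nat_succ.inf_principal _).limsup_eq_iInf_iSup]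
  simp only [iInf_true]

theorem lowerSemicontinuous_biSup_slope (hf : Continuous f) (r : ℝ) :
    LowerSemicontinuous fun x => ⨆ y ∈ Metric.ball x r ∩ {x}ᶜ,
      ENNReal.ofReal (|f y - f x| / dist y x) := by
  intro x a ha
  obtain ⟨y, ⟨hyr, hyx⟩, hay⟩ := lt_biSup_iff.1 ha
  have hdist : Continuous fun x' => dist y x' := continuous_const.dist continuous_id
  have hpos : dist y x ≠ 0 := dist_ne_zero.2 hyx
  have hq : ContinuousAt (fun x' => ENNReal.ofReal (|f y - f x'| / dist y x')) x :=
    ENNReal.continuous_ofReal.continuousAt.comp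
      (((continuous_const.sub hf).abs.continuousAt).div hdist.continuousAt hpos)
  filter_upwards [hq.eventually (lt_mem_nhds hay),
    hdist.continuousAt.eventually (gt_mem_nhds (Metric.mem_ball.1 hyr)),
    hdist.continuousAt.eventually (isOpen_ne.mem_nhds hpos)] with x' h1 h2 h3
  exact lt_biSup_iff.2 ⟨y, ⟨Metric.mem_ball.2 h2, dist_ne_zero.1 h3⟩, h1⟩

theorem measurable_eLipSlope [MeasurableSpace X] [BorelSpace X] (hf : Continuous f) :
    Measurable (eLipSlope f) := by
  rw [funext (eLipSlope_eq_iInf_iSup f)]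
  exact .iInf fun n => (lowerSemicontinuous_biSup_slope hf _).measurable

theorem lintegral_eLipSlope_le [MeasurableSpace X] [BorelSpace X] (m : Measure X)
    (hf : LipschitzWith K f) :
    ∫⁻ x, eLipSlope f x ∂m ≤ K * m (tsupport f) := by
  rw [← lintegral_indicator_const (isClosed_tsupport f).measurableSet]
  refine lintegral_mono fun x => ?_
  by_cases hx : x ∈ tsupport f
  · simpa [hx] using eLipSlope_le hf x
  · have hfx := image_eq_zero_of_notMem_tsupport hx
    rw [eLipSlope_eq_zero_of_eventually_eq]
    · exact zero_le
    · filter_upwards [notMem_tsupport_iff_eventuallyEq.1 hx] with y hy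
      rw [hy, hfx]; rfl

end eLipSlope

section ramp

variable {t s : ℝ} {n : ℕ}

noncomputable def ramp (t : ℝ) (n : ℕ) (s : ℝ) : ℝ :=
  min 1 (max 0 ((n + 1) * (s - t)))

theorem ramp_eq_zero (h : s ≤ t) : ramp t n s = 0 := by
  have : (n + 1 : ℝ) * (s - t) ≤ 0 :=
    mul_nonpos_of_nonneg_of_nonpos (by positivity) (by linarith)
  simp [ramp, max_eq_left this]

theorem ramp_eq_one (h : t + (n + 1 : ℝ)⁻¹ ≤ s) : ramp t n s = 1 := by
  have : 1 ≤ (n + 1 : ℝ) * (s - t) :=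
    calc 1 = (n + 1 : ℝ) * (n + 1 : ℝ)⁻¹ := (mul_inv_cancel₀ (by positivity)).symm
      _ ≤ (n + 1 : ℝ) * (s - t) := by gcongr; linarith
  simp [ramp, max_eq_right (zero_le_one.trans this), this]

theorem ramp_mem_Icc : ramp t n s ∈ Set.Icc 0 1 :=
  ⟨le_min zero_le_one (le_max_left _ _), min_le_left _ _⟩

theorem lipschitzWith_ramp : LipschitzWith (n + 1) (ramp t n) := by
  have hlin : LipschitzWith (n + 1) fun s : ℝ => (n + 1) * (s - t) :=
    LipschitzWith.of_dist_le_mul fun a b => by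
      rw [Real.dist_eq, Real.dist_eq, ← mul_sub, sub_sub_sub_cancel_right, abs_mul,
        abs_of_pos (by positivity)]
      push_cast; rfl
  exact (hlin.const_max 0).const_min 1

theorem eventually_ramp_eq_indicator (t s : ℝ) :
    ∀ᶠ n in atTop, ramp t n s = (Set.Ioi t).indicator 1 s := by
  rcases le_or_gt s t with hst | hts
  · exact Eventually.of_forall fun n => by simp [ramp_eq_zero hst, hst.not_gt]
  · obtain ⟨N, hN⟩ := exists_nat_one_div_lt (sub_pos.2 hts)
    filter_upwards [eventually_ge_atTop N] with n hn
    have : (n + 1 : ℝ)⁻¹ ≤ 1 / (N + 1) := by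
      rw [one_div]; gcongr
    simp [ramp_eq_one (n := n) (by linarith : t + (n + 1 : ℝ)⁻¹ ≤ s), hts]

theorem ramp_eventually_eq_of_notMem (h : s ∉ Set.Icc t (t + (n + 1 : ℝ)⁻¹)) :
    ∀ᶠ s' in 𝓝 s, ramp t n s' = ramp t n s := by
  rw [Set.mem_Icc, not_and_or, not_le, not_le] at h
  rcases h with hst | hst
  · filter_upwards [gt_mem_nhds hst] with s' hs'
    rw [ramp_eq_zero hs'.le, ramp_eq_zero hst.le]
  · filter_upwards [lt_mem_nhds hst] with s' hs'
    rw [ramp_eq_one hs'.le, ramp_eq_one hst.le]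

theorem tendsto_lintegral_ramp_comp_sub_indicator {X : Type*} [MeasurableSpace X]
    {m : Measure X} {f : X → ℝ}
    (hf : Measurable f) (hfin : m {x | t < f x} ≠ ∞) :
    Tendsto (fun n : ℕ => ∫⁻ x, ENNReal.ofReal
      |ramp t n (f x) - {x | t < f x}.indicator (fun _ => (1 : ℝ)) x| ∂m) atTop (𝓝 0) := by
  have hS : MeasurableSet {x | t < f x} := measurableSet_lt measurable_const hf
  have hbound (n : ℕ) (x : X) : ENNReal.ofReal
      |ramp t n (f x) - {x | t < f x}.indicator (fun _ => (1 : ℝ)) x| ≤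
      {x | t < f x}.indicator 1 x := by
    by_cases hx : t < f x
    · have := (ramp_mem_Icc (t := t) (n := n) (s := f x))
      simp only [Set.indicator_of_mem (show x ∈ {x | t < f x} from hx), Pi.one_apply]
      exact ENNReal.ofReal_le_one.2 (abs_le.2 ⟨by linarith [this.1], by linarith [this.2]⟩)
    · simp [hx, ramp_eq_zero (not_lt.1 hx)]
  have hlim (x : X) : Tendsto (fun n : ℕ => ENNReal.ofReal
      |ramp t n (f x) - {x | t < f x}.indicator (fun _ => (1 : ℝ)) x|) atTop (𝓝 0) := by
    refine tendsto_const_nhds.congr' ?_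
    filter_upwards [eventually_ramp_eq_indicator t (f x)] with n hn
    simp [hn, Set.indicator]
  simpa using tendsto_lintegral_of_dominated_convergence _
    (fun n => (lipschitzWith_ramp.continuous.measurable.comp hf).sub
      (measurable_const.indicator hS) |>.abs.ennreal_ofReal)
    (fun n => Eventually.of_forall (hbound n))
    (by simpa [lintegral_indicator hS] using hfin) (Eventually.of_forall hlim)

end ramp

section band

variable {X : Type*} {f : X → ℝ} {φ : X → ℝ≥0∞} {n : ℕ}

noncomputable def bandDensity (f : X → ℝ) (φ : X → ℝ≥0∞) (n : ℕ) (t : ℝ) (x : X) : ℝ≥0∞ :=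
  (f ⁻¹' Set.Icc t (t + (n + 1 : ℝ)⁻¹)).indicator (fun x => (n + 1) * φ x) x

theorem lintegral_bandDensity (f : X → ℝ) (φ : X → ℝ≥0∞) (n : ℕ) (x : X) :
    ∫⁻ t, bandDensity f φ n t x = φ x := by
  have : (fun t => bandDensity f φ n t x) =
      (Set.Icc (f x - (n + 1 : ℝ)⁻¹) (f x)).indicator fun _ => (n + 1) * φ x := by
    ext t
    simp only [bandDensity, Set.indicator, Set.mem_preimage, Set.mem_Icc]
    congr 1
    exact propext ⟨fun h => ⟨by linarith, h.1⟩, fun h => ⟨h.2, by linarith⟩⟩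
  rw [this, lintegral_indicator_const measurableSet_Icc, Real.volume_Icc,
    _root_.sub_sub_cancel, ENNReal.ofReal_inv_of_pos (by positivity), mul_comm, ← mul_assoc]
  norm_cast
  rw [ENNReal.inv_mul_cancel (by simp) (by simp), one_mul]

variable [MeasurableSpace X]

theorem measurable_uncurry_bandDensity (hf : Measurable f) (hφ : Measurable φ) (n : ℕ) :
    Measurable (Function.uncurry (bandDensity f φ n)) := by
  have hS : MeasurableSet {p : ℝ × X | p.1 ≤ f p.2 ∧ f p.2 ≤ p.1 + (n + 1 : ℝ)⁻¹} :=
    (measurableSet_le measurable_fst (hf.comp measurable_snd)).inter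
      (measurableSet_le (hf.comp measurable_snd) (measurable_fst.add_const _))
  exact (measurable_const.mul (hφ.comp measurable_snd)).indicator hS

variable {m : Measure X} [SFinite m]

theorem measurable_lintegral_bandDensity (hf : Measurable f) (hφ : Measurable φ) (n : ℕ) :
    Measurable fun t => ∫⁻ x, bandDensity f φ n t x ∂m :=
  (measurable_uncurry_bandDensity hf hφ n).lintegral_prod_right'

theorem lintegral_liminf_bandDensity_le (hf : Measurable f) (hφ : Measurable φ) :
    ∫⁻ t, liminf (fun n => ∫⁻ x, bandDensity f φ n t x ∂m) atTop ≤ ∫⁻ x, φ x ∂m := by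
  refine (lintegral_liminf_le fun n => measurable_lintegral_bandDensity hf hφ n).trans_eq ?_
  simp_rw [lintegral_lintegral_swap (measurable_uncurry_bandDensity hf hφ _).aemeasurable,
    lintegral_bandDensity, liminf_const]

end band

section perimeter

variable {X : Type*} [MetricSpace X] {f : X → ℝ} {K : NNReal} {t : ℝ}

theorem eLipSlope_ramp_comp_le (hf : Continuous f) (n : ℕ) (x : X) :
    eLipSlope (ramp t n ∘ f) x ≤ bandDensity f (eLipSlope f) n t x := by
  by_cases h : f x ∈ Set.Icc t (t + (n + 1 : ℝ)⁻¹)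
  · rw [bandDensity, Set.indicator_of_mem (Set.mem_preimage.2 h)]
    simpa using eLipSlope_comp_le lipschitzWith_ramp f x
  · exact (eLipSlope_eq_zero_of_eventually_eq (f := ramp t n ∘ f)
      (hf.continuousAt.eventually (ramp_eventually_eq_of_notMem h))).trans_le zero_le

variable [MeasurableSpace X] [BorelSpace X] {m : Measure X}

theorem perimeter_superlevel_le_liminf (hf : LipschitzWith K f) (hfin : m {x | t < f x} ≠ ∞) :
    perimeter m {x | t < f x} ≤
      liminf (fun n : ℕ => ∫⁻ x, bandDensity f (eLipSlope f) n t x ∂m) atTop := by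
  have hlip (n : ℕ) : LipschitzWith ((n + 1) * K) (ramp t n ∘ f) := lipschitzWith_ramp.comp hf
  calc perimeter m {x | t < f x}
      ≤ liminf (fun n => ∫⁻ x, ENNReal.ofReal (lipSlope (ramp t n ∘ f) x) ∂m) atTop :=
        sInf_le ⟨_, fun n _ _ => ⟨_, (hlip n).lipschitzOnWith⟩,
          tendsto_lintegral_ramp_comp_sub_indicator hf.continuous.measurable hfin, rfl⟩
    _ ≤ _ := liminf_le_liminf <| Eventually.of_forall fun n => lintegral_mono fun x =>
      (ofReal_lipSlope (hlip n) x).trans_le (eLipSlope_ramp_comp_le hf.continuous n x)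

end perimeter

theorem sigmaFinite_of_isBounded_lt_top {X : Type*} [PseudoMetricSpace X] [MeasurableSpace X]
    (m : Measure X) (h : ∀ s : Set X, Bornology.IsBounded s → m s < ⊤) : SigmaFinite m := by
  rcases isEmpty_or_nonempty X with hX | ⟨⟨x₀⟩⟩
  · rw [Measure.eq_zero_of_isEmpty m]; infer_instance
  · exact ⟨⟨⟨fun n => Metric.ball x₀ n, fun _ => trivial, fun n => h _ Metric.isBounded_ball,
      Metric.iUnion_ball_nat x₀⟩⟩⟩

theorem coarea_inequality_general {X : Type*} [MetricSpace X]
    [MeasurableSpace X] [BorelSpace X]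
    (m : Measure X)
    (hbdd : ∀ s : Set X, Bornology.IsBounded s → m s < ⊤)
    (f : X → ℝ) (hf : LipBS f) :
    (∀ᵐ t ∂(volume.restrict (Set.Ioi (0:ℝ))), perimeter m {x | t < f x} < ⊤) ∧
    ∫⁻ t in Set.Ioo (0:ℝ) (⨆ x, f x), perimeter m {x | t < f x} ≤
      ∫⁻ x, ENNReal.ofReal (lipSlope f x) ∂m := by
  obtain ⟨⟨K, hK⟩, hsupp⟩ := hf
  have := sigmaFinite_of_isBounded_lt_top m hbdd
  simp_rw [ofReal_lipSlope hK]
  set G : ℝ → ℝ≥0∞ := fun t => liminf (fun n => ∫⁻ x, bandDensity f (eLipSlope f) n t x ∂m) atTop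
  have hslope := measurable_eLipSlope hK.continuous
  have hper (t : ℝ) (ht : 0 < t) : perimeter m {x | t < f x} ≤ G t :=
    perimeter_superlevel_le_liminf hK (hbdd _ (hsupp.subset fun x hx => (ht.trans hx).ne')).ne
  have hG : ∫⁻ t, G t ≤ ∫⁻ x, eLipSlope f x ∂m :=
    lintegral_liminf_bandDensity_le hK.continuous.measurable hslope
  have hfin : ∫⁻ x, eLipSlope f x ∂m < ∞ :=
    (lintegral_eLipSlope_le m hK).trans_lt (mul_lt_top coe_lt_top (hbdd _ hsupp.closure))
  refine ⟨?_, ?_⟩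
  · have hGmeas : Measurable G := .liminf fun n =>
      measurable_lintegral_bandDensity hK.continuous.measurable hslope n
    filter_upwards [ae_restrict_of_ae (ae_lt_top hGmeas (hG.trans_lt hfin).ne),
      ae_restrict_mem measurableSet_Ioi] with t hGt ht
    exact (hper t ht).trans_lt hGt
  · calc ∫⁻ t in Set.Ioo 0 (⨆ x, f x), perimeter m {x | t < f x}
        ≤ ∫⁻ t in Set.Ioo 0 (⨆ x, f x), G t :=
          setLIntegral_mono' measurableSet_Ioo fun t ht => hper t ht.1
      _ ≤ ∫⁻ t, G t := setLIntegral_le_lintegral _ _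
      _ ≤ _ := hG

/-- Coarea inequality: for a complete metric space with a Borel measure finite on bounded
sets and a nonnegative `f ∈ Lip_bs(X)` with `M = sup f`, for a.e. `t > 0` the superlevel set
`{f > t}` has finite perimeter, and `∫_0^M Per({f > t}) dt ≤ ∫ lip(f) dm`. -/
theorem coarea_inequality {X : Type*} [MetricSpace X] [CompleteSpace X]
    [MeasurableSpace X] [BorelSpace X]
    (m : Measure X)
    (hbdd : ∀ s : Set X, Bornology.IsBounded s → m s < ⊤)
    (f : X → ℝ) (hf : LipBS f) (hnonneg : ∀ x, 0 ≤ f x) :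
    (∀ᵐ t ∂(volume.restrict (Set.Ioi (0:ℝ))), perimeter m {x | t < f x} < ⊤) ∧
    ∫⁻ t in Set.Ioo (0:ℝ) (⨆ x, f x), perimeter m {x | t < f x} ≤
      ∫⁻ x, ENNReal.ofReal (lipSlope f x) ∂m :=
  coarea_inequality_general m hbdd f hf
end

section
/- For every K > 0, the Gaussian isoperimetric profile satisfies the asymptotic lim_{x→0⁺} I_K(x) / ( x·√(2K·log(1/x)) ) = 1. -/
open Filter Topology

/-- The Gaussian cumulative distribution function `Φ_K`. -/
noncomputable def PhiK (K : ℝ) (x : ℝ) : ℝ :=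
  Real.sqrt (K / (2 * Real.pi)) * ∫ t in Set.Iic x, Real.exp (-K * t ^ 2 / 2)

/-- The Gaussian density `φ_K := Φ_K′`. -/
noncomputable def phiK (K : ℝ) : ℝ → ℝ := deriv (PhiK K)

/-- The Gaussian isoperimetric profile `I_K := φ_K ∘ Φ_K^{-1}`. -/
noncomputable def gaussianIsopProfile (K : ℝ) (p : ℝ) : ℝ :=
  phiK K (Function.invFun (PhiK K) p)

/-! Substituting `x = Φ_K⁻¹(p)`, the limit `p → 0⁺` becomes `x → -∞` and the quotient becomes
`φ_K(x) / (Φ_K(x) √(2K log(1/Φ_K(x))))`. By L'Hôpital's rule, `Φ_K(x) ~ φ_K(x) / (K|x|)`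
(the Mills ratio); taking logarithms, `log(1/Φ_K(x)) ~ Kx²/2`, hence
`√(2K log(1/Φ_K(x))) ~ K|x|` and the quotient is asymptotic to
`φ_K(x) / ((φ_K(x) / (K|x|)) · K|x|) = 1`. -/

open Real MeasureTheory Set Asymptotics

theorem hasDerivAt_integral_Iic {E : Type*} [NormedAddCommGroup E] [NormedSpace ℝ E]
    [CompleteSpace E] {f : ℝ → E} (hf : Continuous f) (hfi : ∀ y, IntegrableOn f (Iic y))
    (x : ℝ) : HasDerivAt (fun y => ∫ t in Iic y, f t) (f x) x := by
  have hsplit :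
      (fun y => ∫ t in Iic y, f t) = fun y => (∫ t in Iic x, f t) + ∫ t in x..y, f t := by
    funext y
    rw [← intervalIntegral.integral_Iic_sub_Iic (hfi x) (hfi y), add_sub_cancel]
  rw [hsplit]
  exact (hf.integral_hasStrictDerivAt x x).hasDerivAt.const_add _

theorem tendsto_sq_atBot_atTop {R : Type*} [Ring R] [LinearOrder R] [IsStrictOrderedRing R] :
    Tendsto (fun x : R => x ^ 2) atBot atTop := by
  simpa only [Function.comp_def, neg_sq] using
    (tendsto_pow_atTop (α := R) two_ne_zero).comp tendsto_neg_atBot_atTop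

theorem isLittleO_log_neg_sq_atBot : (fun x : ℝ => log (-x)) =o[atBot] fun x => x ^ 2 := by
  simpa only [Function.comp_def, rpow_two, neg_sq] using
    (isLittleO_log_rpow_atTop two_pos).comp_tendsto tendsto_neg_atBot_atTop

section Gaussian

variable {K : ℝ}

theorem integrable_exp_neg_mul_sq_div_two (hK : 0 < K) :
    Integrable fun t : ℝ => exp (-K * t ^ 2 / 2) := by
  simpa only [neg_mul, neg_div, mul_div_right_comm] using integrable_exp_neg_mul_sq (half_pos hK)

theorem hasDerivAt_PhiK (hK : 0 < K) (x : ℝ) :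
    HasDerivAt (PhiK K) (√(K / (2 * π)) * exp (-K * x ^ 2 / 2)) x :=
  (hasDerivAt_integral_Iic (by fun_prop)
    (fun _ => (integrable_exp_neg_mul_sq_div_two hK).integrableOn) x).const_mul _

theorem phiK_eq (hK : 0 < K) (x : ℝ) : phiK K x = √(K / (2 * π)) * exp (-K * x ^ 2 / 2) :=
  (hasDerivAt_PhiK hK x).deriv

theorem phiK_pos (hK : 0 < K) (x : ℝ) : 0 < phiK K x := by
  rw [phiK_eq hK]
  positivity

theorem hasDerivAt_phiK (hK : 0 < K) (x : ℝ) : HasDerivAt (phiK K) (-K * x * phiK K x) x := by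
  have hexp : HasDerivAt (fun x => exp (-K * x ^ 2 / 2)) (exp (-K * x ^ 2 / 2) * (-K * x)) x := by
    have := (((hasDerivAt_pow 2 x).const_mul (-K)).div_const 2).exp
    convert this using 2; ring
  have h := hexp.const_mul (√(K / (2 * π)))
  rw [← funext (phiK_eq hK)] at h
  exact h.congr_deriv (by rw [phiK_eq hK]; ring)

theorem strictMono_PhiK (hK : 0 < K) : StrictMono (PhiK K) :=
  strictMono_of_deriv_pos (phiK_pos hK)

theorem continuous_PhiK (hK : 0 < K) : Continuous (PhiK K) :=
  continuous_iff_continuousAt.2 fun x => (hasDerivAt_PhiK hK x).continuousAt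

theorem tendsto_PhiK_atTop (hK : 0 < K) : Tendsto (PhiK K) atTop (𝓝 1) := by
  have hmass : √(K / (2 * π)) * ∫ t, exp (-K * t ^ 2 / 2) = 1 := by
    simp only [neg_div, mul_div_right_comm, integral_gaussian]
    rw [← sqrt_mul (by positivity), ← sqrt_one]
    congr 1
    field_simp
  rw [← hmass]
  exact ((aecover_Iic tendsto_id).integral_tendsto_of_countably_generated
    (integrable_exp_neg_mul_sq_div_two hK)).const_mul _

theorem tendsto_PhiK_atBot : Tendsto (PhiK K) atBot (𝓝 0) := by
  unfold PhiK
  simpa using (tendsto_integral_Iic_zero tendsto_id).const_mul (√(K / (2 * π)))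

theorem tendsto_phiK_atBot (hK : 0 < K) : Tendsto (phiK K) atBot (𝓝 0) := by
  have hexp : Tendsto (fun x : ℝ => -K * x ^ 2 / 2) atBot atBot := by
    simpa only [Function.comp_def, neg_mul, neg_div] using tendsto_neg_atTop_atBot.comp
      ((tendsto_sq_atBot_atTop.const_mul_atTop hK).atTop_div_const two_pos)
  simpa only [funext (phiK_eq hK), Function.comp_def, mul_zero] using
    (tendsto_exp_atBot.comp hexp).const_mul (√(K / (2 * π)))

theorem hasDerivAt_phiK_div (hK : 0 < K) {x : ℝ} (hx : x < 0) :
    HasDerivAt (fun x => phiK K x / (K * -x)) (phiK K x * (1 + 1 / (K * x ^ 2))) x := by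
  have hx0 : x ≠ 0 := hx.ne
  have hlin : HasDerivAt (fun x : ℝ => K * -x) (K * -1) x := ((hasDerivAt_id x).neg).const_mul K
  refine ((hasDerivAt_phiK hK x).div hlin (by simp [hK.ne', hx0])).congr_deriv ?_
  field_simp
  ring

theorem tendsto_phiK_div_atBot (hK : 0 < K) :
    Tendsto (fun x => phiK K x / (K * -x)) atBot (𝓝[>] 0) := by
  have hinv : Tendsto (fun x : ℝ => (K * -x)⁻¹) atBot (𝓝 0) :=
    tendsto_inv_atTop_zero.comp (tendsto_neg_atBot_atTop.const_mul_atTop hK)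
  refine tendsto_nhdsWithin_iff.2 ⟨?_, ?_⟩
  · simpa only [div_eq_mul_inv, zero_mul] using (tendsto_phiK_atBot hK).mul hinv
  · filter_upwards [eventually_lt_atBot 0] with x hx
    exact div_pos (phiK_pos hK x) (mul_pos hK (neg_pos.2 hx))

theorem PhiK_isEquivalent_atBot (hK : 0 < K) :
    PhiK K ~[atBot] fun x => phiK K x / (K * -x) := by
  have hneg : ∀ᶠ x : ℝ in atBot, x < 0 := eventually_lt_atBot 0
  have hcorr : Tendsto (fun x : ℝ => 1 / (1 + 1 / (K * x ^ 2))) atBot (𝓝 1) := by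
    have h : Tendsto (fun x : ℝ => 1 / (K * x ^ 2)) atBot (𝓝 0) := by
      simpa only [Function.comp_def, one_div] using
        tendsto_inv_atTop_zero.comp (tendsto_sq_atBot_atTop.const_mul_atTop hK)
    have := (tendsto_const_nhds (x := (1 : ℝ))).div (h.const_add 1) (by norm_num)
    rwa [add_zero, div_one] at this
  rw [isEquivalent_iff_tendsto_one (hneg.mono fun x hx =>
    div_ne_zero (phiK_pos hK x).ne' (mul_pos hK (neg_pos.2 hx)).ne')]
  refine HasDerivAt.lhopital_zero_atBot
    (Eventually.of_forall fun x => ((hasDerivAt_PhiK hK x).differentiableAt.hasDerivAt))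
    (hneg.mono fun x hx => hasDerivAt_phiK_div hK hx)
    (Eventually.of_forall fun x => (mul_pos (phiK_pos hK x) (by positivity)).ne')
    tendsto_PhiK_atBot ((tendsto_phiK_div_atBot hK).mono_right nhdsWithin_le_nhds)
    (hcorr.congr fun x =>
      ((div_mul_cancel_left₀ (phiK_pos hK x).ne' _).trans (one_div _).symm).symm)

theorem log_inv_PhiK_isEquivalent_atBot (hK : 0 < K) :
    (fun x => log (1 / PhiK K x)) ~[atBot] fun x => K * x ^ 2 / 2 := by
  have hc : 0 < √(K / (2 * π)) := by positivity
  have hlog : (fun x => log (1 / PhiK K x)) ~[atBot] fun x => log (phiK K x / (K * -x))⁻¹ := by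
    simpa only [one_div, Pi.inv_apply] using (PhiK_isEquivalent_atBot hK).inv.log
      (tendsto_phiK_div_atBot hK).inv_tendsto_nhdsGT_zero
  have hsplit : (fun x => log (phiK K x / (K * -x))⁻¹) =ᶠ[atBot]
      (fun x => K * x ^ 2 / 2) + fun x => log (-x) + (log K - log √(K / (2 * π))) := by
    filter_upwards [eventually_lt_atBot 0] with x hx
    rw [inv_div, phiK_eq hK, log_div (mul_pos hK (neg_pos.2 hx)).ne' (by positivity),
      log_mul hK.ne' (neg_pos.2 hx).ne', log_mul hc.ne' (exp_pos _).ne', log_exp, Pi.add_apply]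
    ring
  have hremainder : (fun x => log (-x) + (log K - log √(K / (2 * π)))) =o[atBot]
      fun x => K * x ^ 2 / 2 := by
    have hconst : (fun _ : ℝ => log K - log √(K / (2 * π))) =o[atBot] fun x : ℝ => x ^ 2 :=
      isLittleO_const_left.2 (Or.inr (tendsto_norm_atTop_atTop.comp tendsto_sq_atBot_atTop))
    simpa only [mul_div_right_comm, mul_comm (K / 2)] using
      (isLittleO_log_neg_sq_atBot.add hconst).const_mul_right'
        (isUnit_iff_ne_zero.2 (half_pos hK).ne')
  exact (hlog.congr_right hsplit).trans (IsEquivalent.refl.add_isLittleO hremainder)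

theorem sqrt_two_mul_log_inv_PhiK_isEquivalent_atBot (hK : 0 < K) :
    (fun x => √(2 * K * log (1 / PhiK K x))) ~[atBot] fun x => K * -x := by
  have h := ((IsEquivalent.refl (u := fun _ => 2 * K)).mul
    (log_inv_PhiK_isEquivalent_atBot hK)).rpow (r := 1 / 2)
      (fun x => by simp only [Pi.mul_apply, Pi.zero_apply]; positivity)
  simp only [Pi.pow_def, Pi.mul_apply, ← sqrt_eq_rpow] at h
  refine h.congr_right ?_
  filter_upwards [eventually_lt_atBot 0] with x hx
  rw [show 2 * K * (K * x ^ 2 / 2) = (K * -x) ^ 2 by ring, sqrt_sq (mul_pos hK (neg_pos.2 hx)).le]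

theorem tendsto_phiK_div_PhiK_mul_sqrt_atBot (hK : 0 < K) :
    Tendsto (fun x => phiK K x / (PhiK K x * √(2 * K * log (1 / PhiK K x)))) atBot (𝓝 1) := by
  have h := (IsEquivalent.refl (u := phiK K)).div
    ((PhiK_isEquivalent_atBot hK).mul (sqrt_two_mul_log_inv_PhiK_isEquivalent_atBot hK))
  refine h.symm.tendsto_nhds (tendsto_const_nhds.congr' ?_)
  filter_upwards [eventually_lt_atBot 0] with x hx
  simp only [Pi.div_apply, Pi.mul_apply]
  rw [div_mul_cancel₀ _ (mul_pos hK (neg_pos.2 hx)).ne', div_self (phiK_pos hK x).ne']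

theorem PhiK_invFun (hK : 0 < K) {p : ℝ} (hp : p ∈ Ioo 0 1) :
    PhiK K (Function.invFun (PhiK K) p) = p :=
  Function.invFun_eq <| mem_range_of_exists_le_of_exists_ge (continuous_PhiK hK)
    (tendsto_PhiK_atBot.eventually (eventually_le_nhds hp.1)).exists
    ((tendsto_PhiK_atTop hK).eventually (eventually_ge_nhds hp.2)).exists

theorem tendsto_invFun_PhiK_nhdsGT_zero (hK : 0 < K) :
    Tendsto (Function.invFun (PhiK K)) (𝓝[>] 0) atBot := by
  have hmono := strictMono_PhiK hK
  refine tendsto_atBot.2 fun M => ?_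
  have hpos : 0 < PhiK K M :=
    (hmono.monotone.le_of_tendsto tendsto_PhiK_atBot (M - 1)).trans_lt (hmono (sub_one_lt M))
  have hlt : PhiK K M < 1 :=
    (hmono (lt_add_one M)).trans_le (hmono.monotone.ge_of_tendsto (tendsto_PhiK_atTop hK) _)
  filter_upwards [Ioo_mem_nhdsGT hpos] with p hp
  rw [← hmono.le_iff_le, PhiK_invFun hK ⟨hp.1, hp.2.trans hlt⟩]
  exact hp.2.le

end Gaussian

/-- Asymptotic of the Gaussian isoperimetric profile at `0`:
`lim_{x→0⁺} I_K(x) / (x √(2K log(1/x))) = 1` for every `K > 0`. -/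
theorem gaussianIsopProfile_asymptotic (K : ℝ) (hK : 0 < K) :
    Tendsto (fun x : ℝ =>
        gaussianIsopProfile K x / (x * Real.sqrt (2 * K * Real.log (1 / x))))
      (𝓝[>] 0) (𝓝 1) := by
  refine ((tendsto_phiK_div_PhiK_mul_sqrt_atBot hK).comp
    (tendsto_invFun_PhiK_nhdsGT_zero hK)).congr' ?_
  filter_upwards [Ioo_mem_nhdsGT one_pos] with p hp
  simp only [Function.comp_apply, PhiK_invFun hK hp, gaussianIsopProfile]
end
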